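/- If a class of graphs admits a polynomial-time algorithm computing 2ccvs exactly, then 2ccvs provides a factor-2 approximation of 2ccedvs on that class: for every graph G, 2ccedvs(G) ≤ 2ccvs(G) ≤ 2 · 2ccedvs(G), so outputting the split-only optimum approximates the mixed optimum within factor 2. -/

import Mathlib

open SimpleGraph

/-- `H` is obtained from `G` by splitting vertex `v` into two copies `v` and `v'`
(where `v'` was an isolated vertex), with `N(v₁) ∪ N(v₂) = N(v)`. -/
def IsSplitAt {V : Type*} (v v' : V) (G H : SimpleGraph V) : Prop :=
  v ≠ v' ∧ G.neighborSet v' = ∅ ∧ ¬ H.Adj v v' ∧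
  (∀ x y : V, x ≠ v → x ≠ v' → y ≠ v → y ≠ v' → (H.Adj x y ↔ G.Adj x y)) ∧
  (∀ x : V, x ≠ v → x ≠ v' → ((H.Adj v x ∨ H.Adj v' x) ↔ G.Adj v x))

/-- `H` is obtained from `G` by a single vertex split. -/
def IsSplit {V : Type*} (G H : SimpleGraph V) : Prop :=
  ∃ v v', IsSplitAt v v' G H

/-- `H` is obtained from `G` by deleting a single (existing) edge. -/
def IsEdgeDeletion {V : Type*} (G H : SimpleGraph V) : Prop :=
  ∃ u v : V, G.Adj u v ∧ H = G.deleteEdges {s(u, v)}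

/-- Editing operations: edge deletion, or vertex split (recording the split vertex
and the name of the new copy). -/
inductive Op where
  | del : ℕ → ℕ → Op
  | split : ℕ → ℕ → Op

/-- Semantics of one operation. -/
def OpApplies : Op → SimpleGraph ℕ → SimpleGraph ℕ → Prop
  | Op.del u v, G, H => G.Adj u v ∧ H = G.deleteEdges {s(u, v)}
  | Op.split v v', G, H => IsSplitAt v v' G H

/-- Applying a list of operations in order. -/
def OpsApply : List Op → SimpleGraph ℕ → SimpleGraph ℕ → Prop
  | [], G, H => H = G
  | o :: l, G, H => ∃ G', OpApplies o G G' ∧ OpsApply l G' H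

def IsSplitOp : Op → Prop
  | Op.split _ _ => True
  | Op.del _ _ => False

/-- The set of vertices on which a split is performed in the list of operations. -/
def splitVerts (l : List Op) : Set ℕ := {v | ∃ v', Op.split v v' ∈ l}

/-- `G` is a disjoint union of 2-clubs: within each connected component all
distances are at most 2. -/
def Is2ClubGraph (G : SimpleGraph ℕ) : Prop :=
  ∀ u v : ℕ, G.Reachable u v → G.dist u v ≤ 2

/-- Minimum number of vertex splits turning `G` into a disjoint union of 2-clubs. -/
noncomputable def twoCcvs (G : SimpleGraph ℕ) : ℕ :=
  sInf {k | ∃ l H, l.length = k ∧ (∀ o ∈ l, IsSplitOp o) ∧ OpsApply l G H ∧ Is2ClubGraph H}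

/-- Minimum number of edge deletions and vertex splits turning `G` into a
disjoint union of 2-clubs. -/
noncomputable def twoCcedvs (G : SimpleGraph ℕ) : ℕ :=
  sInf {k | ∃ l H, l.length = k ∧ OpsApply l G H ∧ Is2ClubGraph H}

/-- The subgraph of `G` induced on `s` (kept on the same vertex type, all
vertices outside `s` becoming isolated). -/
def inducedOn (G : SimpleGraph ℕ) (s : Set ℕ) : SimpleGraph ℕ where
  Adj x y := G.Adj x y ∧ x ∈ s ∧ y ∈ s
  symm := ⟨fun x y h => ⟨h.1.symm, h.2.2, h.2.1⟩⟩
  loopless := ⟨fun x h => G.loopless.irrefl x h.1⟩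

/-- The set `s` induces a 2-club in `G` (connected, diameter at most 2). -/
def Inducing2Club (G : SimpleGraph ℕ) (s : Set ℕ) : Prop :=
  ∀ u ∈ s, ∀ v ∈ s, (inducedOn G s).Reachable u v ∧ (inducedOn G s).dist u v ≤ 2

/-- The path with vertices `0, 1, …, m` (length `m`). -/
def pathG (m : ℕ) : SimpleGraph ℕ :=
  SimpleGraph.fromRel (fun i j => j = i + 1 ∧ j ≤ m)

/-- The cycle with vertices `0, 1, …, n-1`. -/
def cycleG (n : ℕ) : SimpleGraph ℕ :=
  SimpleGraph.fromRel (fun i j => i < n ∧ j = (i + 1) % n)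


/-!
A split-only sequence is an edit sequence, which gives the first inequality. Conversely, deleting
an edge `uv` is simulated by two splits: split `v`, giving its new copy `b` only the neighbour `u`,
then split `u`, giving its new copy `a` only the neighbour `b`. This yields `G - uv` together with
an isolated edge `ab`. Choosing `a` and `b` outside every vertex the later operations mention,
those operations act on `G - uv` and leave the edge `ab` alone, and adding an isolated edge to a
disjoint union of 2-clubs keeps it one. Replacing each deletion in this way at most doubles the
number of operations.
-/

def Op.verts : Op → Set ℕ
  | Op.del u v => {u, v}
  | Op.split v v' => {v, v'}

lemma Op.finite_verts (o : Op) : o.verts.Finite := by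
  cases o <;> simp [Op.verts]

lemma Op.biUnion_verts_cons (o : Op) (l : List Op) :
    ⋃ o' ∈ o :: l, o'.verts = o.verts ∪ ⋃ o' ∈ l, o'.verts := by
  simp only [List.mem_cons, Set.iUnion_iUnion_eq_or_left]

section Support

variable {G G' H : SimpleGraph ℕ}

lemma OpApplies.support_subset {o : Op} (h : OpApplies o G G') :
    G'.support ⊆ G.support ∪ o.verts := by
  cases o with
  | del u v =>
    obtain ⟨-, rfl⟩ := h
    exact fun x hx => Or.inl (support_mono (deleteEdges_le _) hx)
  | split v v' =>
    obtain ⟨-, -, -, hout, hin⟩ := h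
    rintro x ⟨y, hxy⟩
    by_cases hx : x = v ∨ x = v'
    · exact Or.inr hx
    obtain ⟨hxv, hxv'⟩ := not_or.1 hx
    refine Or.inl ?_
    by_cases hy : y = v ∨ y = v'
    · exact ⟨v, ((hin x hxv hxv').1 (by rcases hy with rfl | rfl <;> simp [hxy.symm])).symm⟩
    · obtain ⟨hyv, hyv'⟩ := not_or.1 hy
      exact ⟨y, (hout x y hxv hxv' hyv hyv').1 hxy⟩

lemma OpsApply.support_subset {l : List Op} (h : OpsApply l G H) :
    H.support ⊆ G.support ∪ ⋃ o ∈ l, o.verts := by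
  induction l generalizing G with
  | nil => cases h; exact Set.subset_union_left
  | cons o l ih =>
    obtain ⟨G', ho, hl⟩ := h
    calc H.support ⊆ G'.support ∪ ⋃ o' ∈ l, o'.verts := ih hl
      _ ⊆ (G.support ∪ o.verts) ∪ ⋃ o' ∈ l, o'.verts :=
        Set.union_subset_union_left _ ho.support_subset
      _ = G.support ∪ ⋃ o' ∈ o :: l, o'.verts := by
        rw [Op.biUnion_verts_cons, Set.union_assoc]

end Support

section Lift

variable {G G' H K : SimpleGraph ℕ}

lemma OpApplies.sup {o : Op} (h : OpApplies o G G') (hK : Disjoint K.support o.verts) :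
    OpApplies o (G ⊔ K) (G' ⊔ K) := by
  have hK' : ∀ x ∈ o.verts, ∀ y, ¬ K.Adj x y := fun x hx y hxy =>
    Set.disjoint_right.1 hK hx ⟨y, hxy⟩
  cases o with
  | del u v =>
    obtain ⟨huv, rfl⟩ := h
    refine ⟨Or.inl huv, ?_⟩
    ext x y
    simp only [sup_adj, deleteEdges_adj, Set.mem_singleton_iff]
    constructor
    · rintro (⟨hxy, hne⟩ | hxy)
      · exact ⟨Or.inl hxy, hne⟩
      · refine ⟨Or.inr hxy, fun he => ?_⟩
        rcases Sym2.eq_iff.1 he with ⟨rfl, -⟩ | ⟨rfl, -⟩ <;>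
          exact hK' x (by simp [Op.verts]) y hxy
    · rintro ⟨hxy | hxy, hne⟩
      · exact Or.inl ⟨hxy, hne⟩
      · exact Or.inr hxy
  | split v v' =>
    obtain ⟨hne, hiso, hnadj, hout, hin⟩ := h
    have hv := hK' v (by simp [Op.verts])
    have hv' := hK' v' (by simp [Op.verts])
    refine ⟨hne, ?_, ?_, ?_, ?_⟩
    · simpa [Set.eq_empty_iff_forall_notMem, hv'] using hiso
    · simpa [hv] using hnadj
    · intro x y hxv hxv' hyv hyv'
      simp only [sup_adj, hout x y hxv hxv' hyv hyv']
    · intro x hxv hxv'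
      simpa [hv, hv', or_assoc] using hin x hxv hxv'

lemma OpsApply.sup {l : List Op} (h : OpsApply l G H) (hK : ∀ o ∈ l, Disjoint K.support o.verts) :
    OpsApply l (G ⊔ K) (H ⊔ K) := by
  induction l generalizing G with
  | nil => cases h; rfl
  | cons o l ih =>
    obtain ⟨G', ho, hl⟩ := h
    exact ⟨G' ⊔ K, ho.sup (hK o (by simp)),
      ih hl fun o' ho' => hK o' (List.mem_cons_of_mem o ho')⟩

end Lift

lemma OpsApply.append {l₁ l₂ : List Op} {G G' H : SimpleGraph ℕ} (h₁ : OpsApply l₁ G G')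
    (h₂ : OpsApply l₂ G' H) : OpsApply (l₁ ++ l₂) G H := by
  induction l₁ generalizing G with
  | nil => cases h₁; exact h₂
  | cons o l ih =>
    obtain ⟨G'', ho, hl⟩ := h₁
    exact ⟨G'', ho, ih hl⟩

lemma isSplitAt_deleteEdges_sup_edge {V : Type*} {G : SimpleGraph V} {u v w : V}
    (huv : G.Adj u v) (hw : w ∉ G.support) :
    IsSplitAt v w G (G.deleteEdges {s(u, v)} ⊔ edge u w) := by
  have hwG : ∀ x, ¬ G.Adj w x := fun x hx => hw ⟨x, hx⟩
  have hGw : ∀ x, ¬ G.Adj x w := fun x hx => hwG x hx.symm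
  have hvw : v ≠ w := fun h => hw (h ▸ ⟨u, huv.symm⟩)
  have huw : u ≠ w := fun h => hw (h ▸ ⟨v, huv⟩)
  refine ⟨hvw, ?_, ?_, ?_, ?_⟩
  · ext x; simpa using hwG x
  · simp [edge_adj, hvw, hGw, huv.ne.symm]
  · intro x y hxv hxw hyv hyw
    simp [edge_adj, hxw, hyw, hyv, hxv]
  · intro x hxv hxw
    by_cases hxu : x = u
    · subst hxu; simp [edge_adj, huw.symm, huv.symm]
    · simp [edge_adj, hxu, hxv, hxw, hwG]

lemma opsApply_split_split_deleteEdges {G : SimpleGraph ℕ} {u v a b : ℕ} (huv : G.Adj u v)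
    (ha : a ∉ G.support) (hb : b ∉ G.support) (hab : a ≠ b) :
    OpsApply [Op.split v b, Op.split u a] G (G.deleteEdges {s(u, v)} ⊔ edge a b) := by
  set G₁ := G.deleteEdges {s(u, v)} ⊔ edge u b
  have hau : a ≠ u := fun h => ha (h ▸ ⟨v, huv⟩)
  have hbu : b ≠ u := fun h => hb (h ▸ ⟨v, huv⟩)
  have hbu₁ : G₁.Adj b u := by simp [G₁, edge_adj, hbu]
  have ha₁ : a ∉ G₁.support := by
    rintro ⟨x, hx⟩
    simp only [G₁, sup_adj, deleteEdges_adj, edge_adj] at hx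
    exact hx.elim (fun h => ha ⟨x, h.1⟩) (by tauto)
  -- the second split moves the endpoint `u` of the new edge `ub` to `a`
  refine ⟨G₁, isSplitAt_deleteEdges_sup_edge huv hb, _,
    isSplitAt_deleteEdges_sup_edge hbu₁ ha₁, ?_⟩
  ext x y
  simp only [G₁, sup_adj, deleteEdges_adj, edge_adj, Set.mem_singleton_iff, Sym2.eq_iff]
  have hbG : ∀ x, ¬ G.Adj b x := fun x hx => hb ⟨x, hx⟩
  have hGb : ∀ x, ¬ G.Adj x b := fun x hx => hbG x hx.symm
  grind

namespace SimpleGraph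

variable {V : Type*} {H K : SimpleGraph V}

lemma Adj.reachable_trans_of_disjoint_support {x y z : V} (hxy : H.Adj x y)
    (hyz : K.Reachable y z) (hHK : Disjoint H.support K.support) : H.Reachable x z := by
  obtain rfl | hne := eq_or_ne y z
  · exact hxy.reachable
  · exact absurd (mem_support_of_reachable hne hyz)
      (Set.disjoint_left.1 hHK ⟨x, hxy.symm⟩)

lemma reachable_or_reachable_of_sup (hHK : Disjoint H.support K.support) {u v : V}
    (h : (H ⊔ K).Reachable u v) : H.Reachable u v ∨ K.Reachable u v := by
  obtain ⟨p⟩ := h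
  induction p with
  | nil => exact Or.inl .rfl
  | cons hxy _ ih =>
    rcases hxy with hxy | hxy <;> rcases ih with hyz | hyz
    · exact Or.inl (hxy.reachable.trans hyz)
    · exact Or.inl (Adj.reachable_trans_of_disjoint_support hxy hyz hHK)
    · exact Or.inr (Adj.reachable_trans_of_disjoint_support hxy hyz hHK.symm)
    · exact Or.inr (hxy.reachable.trans hyz)

lemma support_edge_subset (a b : V) : (edge a b).support ⊆ {a, b} := by
  intro x hx
  obtain ⟨y, hxy⟩ := (mem_support _).1 hx
  rw [edge_adj] at hxy
  aesop

end SimpleGraph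

lemma Is2ClubGraph.sup {H K : SimpleGraph ℕ} (hH : Is2ClubGraph H) (hK : Is2ClubGraph K)
    (hHK : Disjoint H.support K.support) : Is2ClubGraph (H ⊔ K) := by
  intro u v huv
  rcases reachable_or_reachable_of_sup hHK huv with h | h
  · exact (h.dist_anti le_sup_left).trans (hH u v h)
  · exact (h.dist_anti le_sup_right).trans (hK u v h)

lemma is2ClubGraph_edge (a b : ℕ) : Is2ClubGraph (edge a b) := by
  intro u v huv
  obtain rfl | hne := eq_or_ne u v
  · simp
  have hu := support_edge_subset a b (mem_support_of_reachable hne huv)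
  have hv := support_edge_subset a b (mem_support_of_reachable hne.symm huv.symm)
  have hadj : (edge a b).Adj u v := by
    simp only [Set.mem_insert_iff, Set.mem_singleton_iff] at hu hv
    rw [edge_adj]; aesop
  rw [dist_eq_one_iff_adj.2 hadj]
  omega

theorem exists_splits_of_opsApply {l : List Op} {G H : SimpleGraph ℕ} (hG : G.support.Finite)
    (h : OpsApply l G H) :
    ∃ l' H', (∀ o ∈ l', IsSplitOp o) ∧ l'.length ≤ 2 * l.length ∧ OpsApply l' G H' ∧
      (Is2ClubGraph H → Is2ClubGraph H') := by
  induction l generalizing G with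
  | nil => exact ⟨[], H, by simp, by simp, h, id⟩
  | cons o l ih =>
    obtain ⟨G', ho, hl⟩ := h
    cases o with
    | split v v' =>
      have hG' : G'.support.Finite :=
        (hG.union (Op.finite_verts _)).subset ho.support_subset
      obtain ⟨l', H', hsplit, hlen, happ, hclub⟩ := ih hG' hl
      refine ⟨Op.split v v' :: l', H', ?_, by simp; omega, ⟨G', ho, happ⟩, hclub⟩
      simpa [IsSplitOp] using hsplit
    | del u v =>
      obtain ⟨huv, rfl⟩ := ho
      have hsupp : (G.deleteEdges {s(u, v)}).support ⊆ G.support :=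
        support_mono (deleteEdges_le _)
      obtain ⟨l', H', hsplit, hlen, happ, hclub⟩ := ih (hG.subset hsupp) hl
      set S := G.support ∪ ⋃ o ∈ l', o.verts
      have hS : S.Finite := hG.union (l'.finite_toSet.biUnion fun o _ => o.finite_verts)
      obtain ⟨a, ha⟩ := hS.exists_notMem
      obtain ⟨b, hb⟩ := (hS.insert a).exists_notMem
      obtain ⟨hba, hb⟩ := not_or.1 hb
      have hfresh : Disjoint S {a, b} := by simp [Set.disjoint_insert_right, ha, hb]
      have hedge : Disjoint S (edge a b).support := hfresh.mono_right (support_edge_subset a b)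
      refine ⟨[Op.split v b, Op.split u a] ++ l', H' ⊔ edge a b, ?_, by simp; omega, ?_, ?_⟩
      · simpa [IsSplitOp] using hsplit
      · refine (opsApply_split_split_deleteEdges huv (fun h => ha (Or.inl h)) (fun h => hb (Or.inl h))
          (Ne.symm hba)).append (happ.sup fun o ho => ?_)
        refine (hedge.mono_left ?_).symm
        exact (Set.subset_biUnion_of_mem (u := Op.verts) ho).trans Set.subset_union_right
      · refine fun hH => (hclub hH).sup (is2ClubGraph_edge a b) (hedge.mono_left ?_)
        exact happ.support_subset.trans (Set.union_subset_union_left _ hsupp)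

lemma Nat.sInf_le_sInf_and_sInf_le_mul {S T : Set ℕ} {c : ℕ} (hTS : T ⊆ S)
    (h : ∀ k ∈ S, ∃ k' ∈ T, k' ≤ c * k) : sInf S ≤ sInf T ∧ sInf T ≤ c * sInf S := by
  rcases S.eq_empty_or_nonempty with rfl | hS
  · simp [Set.subset_empty_iff.1 hTS]
  obtain ⟨k', hk'T, hk'⟩ := h _ (Nat.sInf_mem hS)
  exact ⟨Nat.sInf_le (hTS (Nat.sInf_mem ⟨k', hk'T⟩)), (Nat.sInf_le hk'T).trans hk'⟩

theorem stmt15 (G : SimpleGraph ℕ) (hfin : G.support.Finite) :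
    twoCcedvs G ≤ twoCcvs G ∧ twoCcvs G ≤ 2 * twoCcedvs G := by
  refine Nat.sInf_le_sInf_and_sInf_le_mul
    (fun k ⟨l, H, hk, _, happ, hH⟩ => ⟨l, H, hk, happ, hH⟩) ?_
  rintro _ ⟨l, H, rfl, happ, hH⟩
  obtain ⟨l', H', hsplit, hlen, happ', hclub⟩ := exists_splits_of_opsApply hfin happ
  exact ⟨l'.length, ⟨l', H', rfl, hsplit, happ', hclub hH⟩, hlen⟩
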